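/- arXiv:1402.4928 — 3 statements merged into one kernel-verified Lean document; each statement's English description precedes it below -/
import Mathlib

section
/- Let p be a prime, r = p^t for some t ≥ 1, and let α ∈ F_p((1/T)) have continued fraction expansion [T, T^r, T^{r^2}, ..., T^{r^k}, ...]. Then α satisfies the equation α = T + 1/α^r, i.e. α^{r+1} - Tα^r - 1 = 0. -/
/-- `T = 1/X` in the Laurent series field `F((X)) = F_p((1/T))`. -/
noncomputable def Tvar (F : Type*) [Field F] : LaurentSeries F := HahnSeries.single (-1) 1

/-- `α` has infinite continued fraction expansion `[a 0, a 1, a 2, …]`. -/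
def HasCF {F : Type*} [Field F] (α : LaurentSeries F) (a : ℕ → LaurentSeries F) : Prop :=
  ∃ β : ℕ → LaurentSeries F, β 0 = α ∧ (∀ n, β n = a n + (β (n + 1))⁻¹) ∧
    ∀ n, 1 ≤ n → β n ≠ 0 ∧ (β n).order < 0

/-!
Since `x ↦ x ^ r` is a ring endomorphism in characteristic `p`, raising the complete quotients
of `α = [T, T^r, T^{r²}, …]` to the `r`-th power shows `α ^ r = [T^r, T^{r²}, …]`, which is also
the expansion of the first complete quotient `α₁` of `α`. Continued fraction expansions with
complete quotients of negative order are unique: `x⁻¹ - y⁻¹ = (y - x) / (x y)`, so the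
difference of two such expansions gains order at least `2` at every step. Hence `α₁ = α ^ r` and
`α = T + 1 / α₁ = T + 1 / α ^ r`.
-/

namespace LaurentSeries

variable {F : Type*} [Field F]

theorem order_inv {x : LaurentSeries F} (hx : x ≠ 0) : x⁻¹.order = -x.order := by
  have h := HahnSeries.order_mul hx (inv_ne_zero hx)
  rw [mul_inv_cancel₀ hx, HahnSeries.order_one] at h
  omega

theorem min_order_le_order_sub {x y : LaurentSeries F} (hxy : x ≠ y) :
    min x.order y.order ≤ (x - y).order := by
  have h := HahnSeries.min_order_le_order_add (x := x) (y := -y)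
    (by rwa [← sub_eq_add_neg, sub_ne_zero])
  rwa [HahnSeries.order_neg, ← sub_eq_add_neg] at h

theorem order_inv_sub_inv {x y : LaurentSeries F} (hx : x ≠ 0) (hy : y ≠ 0) (hxy : x ≠ y) :
    (x⁻¹ - y⁻¹).order = (x - y).order - x.order - y.order := by
  have hxy' : x⁻¹ - y⁻¹ = -(x - y) * (x * y)⁻¹ := by
    field_simp
    ring
  rw [hxy', HahnSeries.order_mul (neg_ne_zero.mpr (sub_ne_zero.mpr hxy))
    (inv_ne_zero (mul_ne_zero hx hy)), HahnSeries.order_neg, order_inv (mul_ne_zero hx hy),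
    HahnSeries.order_mul hx hy]
  ring

end LaurentSeries

namespace HasCF

open LaurentSeries

variable {F : Type*} [Field F] {α α' : LaurentSeries F} {a : ℕ → LaurentSeries F}

theorem unique (h : HasCF α a) (h' : HasCF α' a) : α = α' := by
  obtain ⟨x, rfl, hx, hx1⟩ := h
  obtain ⟨y, rfl, hy, hy1⟩ := h'
  have hstep (k : ℕ) (hk : x k ≠ y k) :
      x (k + 1) ≠ y (k + 1) ∧ 1 ≤ (x k - y k).order ∧
        (x (k + 1) - y (k + 1)).order + 2 ≤ (x k - y k).order := by
    have hk' : x (k + 1) ≠ y (k + 1) := fun h => hk (by rw [hx k, hy k, h])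
    obtain ⟨hx0, hxo⟩ := hx1 (k + 1) (by omega)
    obtain ⟨hy0, hyo⟩ := hy1 (k + 1) (by omega)
    have hmin := min_order_le_order_sub hk'
    have hdiff : x k - y k = (x (k + 1))⁻¹ - (y (k + 1))⁻¹ := by
      rw [hx k, hy k]
      ring
    rw [hdiff, order_inv_sub_inv hx0 hy0 hk']
    exact ⟨hk', by omega, by omega⟩
  have hgain (m : ℕ) : ∀ k, x k ≠ y k → 2 * (m : ℤ) + 1 ≤ (x k - y k).order := by
    induction m with
    | zero => exact fun k hk => by simpa using (hstep k hk).2.1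
    | succ m ih =>
      intro k hk
      obtain ⟨hk', -, hstep_gain⟩ := hstep k hk
      have := ih (k + 1) hk'
      omega
  by_contra hne
  have := hgain (x 0 - y 0).order.toNat 0 hne
  omega

theorem tail (h : HasCF α a) :
    ∃ α₁, α = a 0 + α₁⁻¹ ∧ α₁ ≠ 0 ∧ HasCF α₁ fun n => a (n + 1) := by
  obtain ⟨β, rfl, hβ, hβ1⟩ := h
  exact ⟨β 1, hβ 0, (hβ1 1 le_rfl).1,
    fun n => β (n + 1), rfl, fun n => hβ (n + 1), fun n _ => hβ1 (n + 1) (by omega)⟩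

theorem pow_expChar_pow (p : ℕ) [ExpChar F p] (t : ℕ) (h : HasCF α a) :
    HasCF (α ^ p ^ t) fun n => a n ^ p ^ t := by
  have : ExpChar (LaurentSeries F) p := expChar_of_injective_ringHom HahnSeries.C_injective p
  obtain ⟨β, rfl, hβ, hβ1⟩ := h
  refine ⟨fun n => β n ^ p ^ t, rfl, fun n => ?_, fun n hn => ?_⟩
  · dsimp only
    rw [hβ n, add_pow_expChar_pow, inv_pow]
  · obtain ⟨hβ0, hβo⟩ := hβ1 n hn
    refine ⟨pow_ne_zero _ hβ0, ?_⟩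
    rw [HahnSeries.order_pow, nsmul_eq_mul]
    exact mul_neg_of_pos_of_neg (by have := expChar_pos F p; positivity) hβo

end HasCF

theorem frobenius_cf_general (p : ℕ) [Fact p.Prime] (t : ℕ) (r : ℕ) (hr : r = p ^ t)
    (α : LaurentSeries (ZMod p)) (hα : HasCF α fun n => Tvar (ZMod p) ^ r ^ n) :
    α = Tvar (ZMod p) + (α ^ r)⁻¹ ∧ α ^ (r + 1) - Tvar (ZMod p) * α ^ r - 1 = 0 := by
  obtain ⟨α₁, hα_eq, hα₁0, hα₁⟩ := hα.tail
  have hfrob : HasCF (α ^ r) fun n => Tvar (ZMod p) ^ r ^ (n + 1) := by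
    have := hα.pow_expChar_pow p t
    rw [← hr] at this
    simpa only [← pow_mul, ← pow_succ] using this
  obtain rfl : α₁ = α ^ r := hα₁.unique hfrob
  rw [pow_zero, pow_one] at hα_eq
  have hmul : (α - Tvar (ZMod p)) * α ^ r = 1 := by
    rw [sub_eq_of_eq_add' hα_eq, inv_mul_cancel₀ hα₁0]
  exact ⟨hα_eq, by linear_combination hmul⟩

/-- If `α = [T, T^r, T^{r²}, …]` in `F_p((1/T))` with `r = p^t`, `t ≥ 1`,
then `α = T + 1/α^r`, i.e. `α^{r+1} - Tα^r - 1 = 0`. -/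
theorem frobenius_cf (p : ℕ) [Fact p.Prime] (t : ℕ) (ht : 1 ≤ t) (r : ℕ) (hr : r = p ^ t)
    (α : LaurentSeries (ZMod p)) (hα : HasCF α fun n => Tvar (ZMod p) ^ r ^ n) :
    α = Tvar (ZMod p) + (α ^ r)⁻¹ ∧ α ^ (r + 1) - Tvar (ZMod p) * α ^ r - 1 = 0 :=
  frobenius_cf_general p t r hr α hα
end

section
/- Let p be a prime, r = p^t with t ≥ 1, and let α ∈ F_p((1/T)) satisfy α = T + 1/α^r with |α| > 1. Then α is algebraic over F_p(T) of degree exactly r + 1. -/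
open scoped RatFunc

open Polynomial Polynomial.Bivariate

theorem Polynomial.Bivariate.irreducible_C_X_mul_map_C_add_map_C {R : Type*} [CommRing R]
    [IsDomain R] {f g : R[X]} (hf : f ≠ 0) (hfg : IsRelPrime f g) :
    Irreducible (C X * f.map C + g.map C : R[X][Y]) := by
  have hswap : swap (C X * f.map C + g.map C) = C f * X + C g := by
    simp only [map_add, map_mul, swap_X, swap_map_C, mul_comm]
  rw [← MulEquiv.irreducible_iff (swap (R := R)), hswap]
  exact irreducible_C_mul_X_add_C hf hfg

theorem irreducible_C_X_mul_X_pow_succ_sub_X_pow_sub_C_X (A : Type*) [CommRing A] [IsDomain A]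
    (r : ℕ) : Irreducible (C X * Y ^ (r + 1) - Y ^ r - C X : A[X][Y]) := by
  have hcop : IsCoprime (X ^ (r + 1) - 1 : A[X]) (-X ^ r) := ⟨-1, -X, by ring⟩
  convert irreducible_C_X_mul_map_C_add_map_C (X_pow_sub_C_ne_zero r.succ_pos 1) hcop.isRelPrime
    using 1
  simp only [Polynomial.map_sub, Polynomial.map_neg, Polynomial.map_pow, map_X, C_1,
    Polynomial.map_one, Nat.succ_eq_add_one]
  ring

theorem irreducible_C_X_mul_X_pow_succ_sub_X_pow_sub_C_X_ratFunc (A : Type*) [Field A] (r : ℕ) :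
    Irreducible (C RatFunc.X * X ^ (r + 1) - X ^ r - C RatFunc.X : (RatFunc A)[X]) := by
  have hirr := irreducible_C_X_mul_X_pow_succ_sub_X_pow_sub_C_X A r
  have hdeg : (C X * Y ^ (r + 1) - Y ^ r - C X : A[X][Y]).natDegree = r + 1 := by
    compute_degree!
  rw [(hirr.isPrimitive (by omega)).irreducible_iff_irreducible_map_fraction_map
    (K := RatFunc A)] at hirr
  simpa [RatFunc.algebraMap_X] using hirr

section LaurentSeries

variable {F : Type*} [Field F] {r : ℕ} {α : LaurentSeries F}

theorem aeval_C_X_mul_X_pow_succ_sub_X_pow_sub_C_X_eq_zero (hα0 : α ≠ 0)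
    (hα : α = Tvar F + (α ^ r)⁻¹) :
    aeval α (C RatFunc.X * X ^ (r + 1) - X ^ r - C RatFunc.X : (RatFunc F)[X]) = 0 := by
  have hXT : (HahnSeries.single 1 1 : LaurentSeries F) * Tvar F = 1 := by
    rw [Tvar, HahnSeries.single_mul_single]
    simp
  have hinv : α ^ r * (α ^ r)⁻¹ = 1 := mul_inv_cancel₀ (pow_ne_zero r hα0)
  simp only [map_sub, map_mul, map_pow, aeval_X, aeval_C, RatFunc.coe_X]
  linear_combination
    HahnSeries.single 1 1 * α ^ r * hα + HahnSeries.single 1 1 * hinv + α ^ r * hXT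

theorem natDegree_minpoly_of_eq_Tvar_add_inv_pow (hα0 : α ≠ 0)
    (hα : α = Tvar F + (α ^ r)⁻¹) : (minpoly (RatFunc F) α).natDegree = r + 1 := by
  have hirr := irreducible_C_X_mul_X_pow_succ_sub_X_pow_sub_C_X_ratFunc F r
  have hroot := aeval_C_X_mul_X_pow_succ_sub_X_pow_sub_C_X_eq_zero hα0 hα
  rw [← minpoly.eq_of_irreducible hirr hroot,
    natDegree_mul_C (inv_ne_zero (leadingCoeff_ne_zero.mpr hirr.ne_zero))]
  compute_degree!
  exact RatFunc.X_ne_zero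

end LaurentSeries

theorem degree_of_frobenius_root_general (p : ℕ) [Fact p.Prime]
    (r : ℕ) (α : LaurentSeries (ZMod p))
    (hα : α = Tvar (ZMod p) + (α ^ r)⁻¹) (hord : α ≠ 0 ∧ α.order < 0) :
    IsAlgebraic (RatFunc (ZMod p)) α ∧
      (minpoly (RatFunc (ZMod p)) α).natDegree = r + 1 :=
  ⟨⟨_, (irreducible_C_X_mul_X_pow_succ_sub_X_pow_sub_C_X_ratFunc _ r).ne_zero,
      aeval_C_X_mul_X_pow_succ_sub_X_pow_sub_C_X_eq_zero hord.1 hα⟩,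
    natDegree_minpoly_of_eq_Tvar_add_inv_pow hord.1 hα⟩

/-- If `α ∈ F_p((1/T))` satisfies `α = T + 1/α^r` with `|α| > 1` (negative order as a series
in `1/T`), `r = p^t`, `t ≥ 1`, then `α` is algebraic of degree exactly `r + 1` over `F_p(T)`. -/
theorem degree_of_frobenius_root (p : ℕ) [Fact p.Prime] (t : ℕ) (ht : 1 ≤ t)
    (r : ℕ) (hr : r = p ^ t) (α : LaurentSeries (ZMod p))
    (hα : α = Tvar (ZMod p) + (α ^ r)⁻¹) (hord : α ≠ 0 ∧ α.order < 0) :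
    IsAlgebraic (RatFunc (ZMod p)) α ∧
      (minpoly (RatFunc (ZMod p)) α).natDegree = r + 1 :=
  degree_of_frobenius_root_general p r α hα hord
end

section
/- Let p > 3 be a prime, q a power of p, and let A, B, C ∈ F_q(T) satisfy 12A + C^2 = 0 with A ≠ 0. Set P(X) = AX^4 + BX^3 + CX^2 + 1 ∈ F_q(T)[X], and let r = p if p ≡ 1 mod 3 and r = p^2 if p ≡ 2 mod 3. Then there exist U, V, W, Z ∈ F_q(T), not all zero, with H(X) = UX^{r+1} + VX^r + WX + Z not identically zero, such that P(X) divides H(X) in F_q(T)[X]. -/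
/-!
Dividing by `A` turns `P` into the monic quartic `X⁴ + bX³ + cX² + d` with `12d + c² = 0` and no
linear term, so its invariant `I = 12e₄ - 3e₁e₃ + e₂²` vanishes: the roots `a₁, …, a₄` form an
equianharmonic quadruple, i.e. their cross ratio is a primitive sixth root of unity. As
`r = p ^ k ≡ 1 mod 6`, the cross ratio of the Frobenius images `aᵢ ^ r` is the same, so a Möbius
transformation maps each `aᵢ` to `aᵢ ^ r`; equivalently the rows `(aᵢ ^ (r + 1), aᵢ ^ r, aᵢ, 1)` are
linearly dependent, which gives `H` when the roots are distinct. A repeated root is a triple root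
`s` (again because `I = 0`), and then `(X - s) ^ r * (X - t) = (X ^ r - s ^ r) * (X - t)` works.
Finally, `P` divides a nonzero `H` iff the matrix of `X ^ (r + 1), X ^ r, X, 1` reduced modulo `P`
is singular, which does not depend on the field, so it descends from the splitting field of `P`.
-/

open Polynomial Matrix

section Reduction

variable {R : Type*} [CommRing R] {n : ℕ}

noncomputable def reductionMatrix (Q : R[X]) (e : Fin n → ℕ) : Matrix (Fin n) (Fin n) R :=
  Matrix.of fun i j => (X ^ e j %ₘ Q).coeff i

theorem sum_C_mul_X_pow_modByMonic (Q : R[X]) (e : Fin n → ℕ) (v : Fin n → R) :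
    (∑ j, C (v j) * X ^ e j) %ₘ Q = ∑ j, v j • (X ^ e j %ₘ Q) := by
  have := map_sum (modByMonicHom Q) (fun j => v j • (X ^ e j : R[X])) Finset.univ
  simp only [map_smul, modByMonicHom_apply] at this
  simpa [smul_eq_C_mul] using this

theorem eq_zero_iff_forall_coeff_fin_eq_zero {g : R[X]} (hg : g.degree < n) :
    g = 0 ↔ ∀ i : Fin n, g.coeff i = 0 := by
  refine ⟨fun h i => by simp [h], fun h => ext fun k => ?_⟩
  rcases lt_or_ge k n with hk | hk
  · exact h ⟨k, hk⟩
  · exact coeff_eq_zero_of_degree_lt (hg.trans_le (by exact_mod_cast hk))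

theorem dvd_sum_C_mul_X_pow_iff [Nontrivial R] {Q : R[X]} (hQ : Q.Monic)
    (hdeg : Q.natDegree = n) (e : Fin n → ℕ) (v : Fin n → R) :
    Q ∣ ∑ j, C (v j) * X ^ e j ↔ reductionMatrix Q e *ᵥ v = 0 := by
  have hdeg_lt : ((∑ j, C (v j) * X ^ e j) %ₘ Q).degree < n := by
    simpa [degree_eq_natDegree hQ.ne_zero, hdeg] using degree_modByMonic_lt _ hQ
  rw [← modByMonic_eq_zero_iff_dvd hQ, eq_zero_iff_forall_coeff_fin_eq_zero hdeg_lt, funext_iff,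
    sum_C_mul_X_pow_modByMonic]
  refine forall_congr' fun i => ?_
  simp only [finsetSum_coeff, coeff_smul, smul_eq_mul, mulVec, dotProduct, reductionMatrix,
    of_apply, mul_comm, Pi.zero_apply]

theorem reductionMatrix_map {S : Type*} [CommRing S] (f : R →+* S) {Q : R[X]} (hQ : Q.Monic)
    (e : Fin n → ℕ) : reductionMatrix (Q.map f) e = (reductionMatrix Q e).map f := by
  ext i j
  simp only [reductionMatrix, map_apply, of_apply]
  rw [← coeff_map, map_modByMonic f hQ, Polynomial.map_pow, map_X]

theorem sum_C_mul_X_pow_ne_zero {e : Fin n → ℕ} (he : e.Injective) {v : Fin n → R}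
    (hv : v ≠ 0) : ∑ j, C (v j) * X ^ e j ≠ 0 := by
  obtain ⟨i, hi⟩ := Function.ne_iff.mp hv
  intro h
  apply hi
  simpa [finsetSum_coeff, coeff_X_pow, he.eq_iff] using congrArg (coeff · (e i)) h

theorem exists_forall_eval_eq_zero_of_det_eq_zero [IsDomain R] (a : Fin n → R) (e : Fin n → ℕ)
    (h : (Matrix.of fun i j => a i ^ e j).det = 0) :
    ∃ v : Fin n → R, v ≠ 0 ∧ ∀ i, (∑ j, C (v j) * X ^ e j).eval (a i) = 0 := by
  obtain ⟨v, hv, hav⟩ := exists_mulVec_eq_zero_iff.mpr h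
  refine ⟨v, hv, fun i => ?_⟩
  simpa only [eval_finsetSum, eval_mul, eval_C, eval_pow, eval_X, mulVec, dotProduct, of_apply,
    mul_comm, Pi.zero_apply] using congrFun hav i

theorem exists_dvd_sum_C_mul_X_pow_of_map {F K : Type*} [Field F] [Field K] (f : F →+* K)
    {Q : F[X]} (hQ : Q.Monic) (hdeg : Q.natDegree = n) (e : Fin n → ℕ)
    (h : ∃ w : Fin n → K, w ≠ 0 ∧ Q.map f ∣ ∑ j, C (w j) * X ^ e j) :
    ∃ v : Fin n → F, v ≠ 0 ∧ Q ∣ ∑ j, C (v j) * X ^ e j := by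
  obtain ⟨w, hw, hdvd⟩ := h
  rw [dvd_sum_C_mul_X_pow_iff (hQ.map f) (by rw [hQ.natDegree_map, hdeg]),
    reductionMatrix_map f hQ] at hdvd
  have hdet : ((reductionMatrix Q e).map f).det = 0 :=
    exists_mulVec_eq_zero_iff.mp ⟨w, hw, hdvd⟩
  rw [← RingHom.mapMatrix_apply, ← RingHom.map_det, map_eq_zero_iff f f.injective] at hdet
  simp_rw [dvd_sum_C_mul_X_pow_iff hQ hdeg]
  exact exists_mulVec_eq_zero_iff.mpr hdet

end Reduction

def hyperquadraticExponents (r : ℕ) : Fin 4 → ℕ := ![r + 1, r, 1, 0]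

theorem hyperquadraticExponents_injective {r : ℕ} (hr : 2 ≤ r) :
    (hyperquadraticExponents r).Injective := by
  intro i j h
  fin_cases i <;> fin_cases j <;> simp [hyperquadraticExponents] at h ⊢ <;> omega

theorem sum_hyperquadraticExponents {R : Type*} [Semiring R] (r : ℕ) (v : Fin 4 → R) :
    ∑ j, C (v j) * X ^ hyperquadraticExponents r j
      = C (v 0) * X ^ (r + 1) + C (v 1) * X ^ r + C (v 2) * X + C (v 3) := by
  simp [Fin.sum_univ_four, hyperquadraticExponents]

theorem pow_mul_eq_pow_mul_of_pow_six_eq {M : Type*} [CommMonoid M] {x y : M}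
    (hxy : x ^ 6 = y ^ 6) {r : ℕ} (hr : r % 6 = 1) : x ^ r * y = y ^ r * x := by
  rw [← Nat.div_add_mod r 6, hr, pow_succ, pow_succ, pow_mul, pow_mul, hxy, mul_right_comm]

theorem exists_pow_eq_ite_of_prime {p : ℕ} (hp : p.Prime) (h3 : 3 < p) :
    ∃ k, (if p % 3 = 1 then p else p ^ 2) = p ^ k ∧ p ^ k % 6 = 1 ∧ 1 < p ^ k := by
  have h2 : p % 2 = 1 := Nat.odd_iff.mp (hp.odd_of_ne_two (by omega))
  have h3' : p % 3 ≠ 0 := fun h => by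
    have := (Nat.prime_dvd_prime_iff_eq Nat.prime_three hp).mp (Nat.dvd_of_mod_eq_zero h)
    omega
  split_ifs with h
  · exact ⟨1, by rw [pow_one], by rw [pow_one]; omega, by rw [pow_one]; omega⟩
  · refine ⟨2, rfl, ?_, Nat.one_lt_pow two_ne_zero (by omega)⟩
    rw [Nat.pow_mod, show p % 6 = 5 by omega]

section CommRing

variable {R : Type*} [CommRing R]

theorem monic_quartic [Nontrivial R] (b c d : R) :
    (X ^ 4 + C b * X ^ 3 + C c * X ^ 2 + C d).Monic := by
  monicity!

theorem natDegree_quartic [Nontrivial R] (b c d : R) :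
    (X ^ 4 + C b * X ^ 3 + C c * X ^ 2 + C d).natDegree = 4 := by
  compute_degree!

/-- The cross ratio `(a₁ - a₃)(a₂ - a₄) / ((a₁ - a₄)(a₂ - a₃))` is a root of `x² - x + 1`. For the
roots of a monic quartic this is the vanishing of its invariant `I = 12e₄ - 3e₁e₃ + e₂²`. -/
def IsEquianharmonic (a₁ a₂ a₃ a₄ : R) : Prop :=
  ((a₁ - a₃) * (a₂ - a₄)) ^ 2 - (a₁ - a₃) * (a₂ - a₄) * ((a₁ - a₄) * (a₂ - a₃))
    + ((a₁ - a₄) * (a₂ - a₃)) ^ 2 = 0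

theorem isEquianharmonic_of_quartic_eq_prod {b c d a₁ a₂ a₃ a₄ : R} (hcd : 12 * d + c ^ 2 = 0)
    (h : X ^ 4 + C b * X ^ 3 + C c * X ^ 2 + C d
      = (X - C a₁) * (X - C a₂) * (X - C a₃) * (X - C a₄)) :
    IsEquianharmonic a₁ a₂ a₃ a₄ := by
  have hexp : (X - C a₁) * (X - C a₂) * (X - C a₃) * (X - C a₄)
      = X ^ 4 + C (-(a₁ + a₂ + a₃ + a₄)) * X ^ 3
        + C (a₁ * a₂ + a₁ * a₃ + a₁ * a₄ + a₂ * a₃ + a₂ * a₄ + a₃ * a₄) * X ^ 2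
        + C (-(a₁ * a₂ * a₃ + a₁ * a₂ * a₄ + a₁ * a₃ * a₄ + a₂ * a₃ * a₄)) * X
        + C (a₁ * a₂ * a₃ * a₄) := by
    simp only [map_add, map_mul, map_neg]
    ring
  rw [hexp] at h
  have h₀ := congrArg (coeff · 0) h
  have h₁ := congrArg (coeff · 1) h
  have h₂ := congrArg (coeff · 2) h
  simp only [coeff_add, coeff_C_mul, coeff_X_pow, coeff_X, coeff_C] at h₀ h₁ h₂
  norm_num at h₀ h₁ h₂
  subst h₀ h₂
  unfold IsEquianharmonic
  linear_combination hcd - 3 * (a₁ + a₂ + a₃ + a₄) * h₁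

/-- The cross ratio of an equianharmonic quadruple is a sixth root of unity, hence fixed by
`x ↦ x ^ p ^ k` when `p ^ k ≡ 1 [MOD 6]`. -/
theorem IsEquianharmonic.cross_ratio_pow_eq {a₁ a₂ a₃ a₄ : R} (h : IsEquianharmonic a₁ a₂ a₃ a₄)
    (p k : ℕ) [ExpChar R p] (hk : p ^ k % 6 = 1) :
    (a₁ - a₃) * (a₂ - a₄) * ((a₁ ^ p ^ k - a₄ ^ p ^ k) * (a₂ ^ p ^ k - a₃ ^ p ^ k))
      = (a₁ - a₄) * (a₂ - a₃) * ((a₁ ^ p ^ k - a₃ ^ p ^ k) * (a₂ ^ p ^ k - a₄ ^ p ^ k)) := by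
  set z₁ := (a₁ - a₃) * (a₂ - a₄)
  set z₂ := (a₁ - a₄) * (a₂ - a₃)
  have h6 : z₁ ^ 6 = z₂ ^ 6 := by
    unfold IsEquianharmonic at h
    linear_combination (z₁ + z₂) * (z₁ ^ 3 - z₂ ^ 3) * h
  have hfrob : ∀ x y z w : R, ((x - y) * (z - w)) ^ p ^ k
      = (x ^ p ^ k - y ^ p ^ k) * (z ^ p ^ k - w ^ p ^ k) := fun x y z w => by
    rw [mul_pow, sub_pow_expChar_pow, sub_pow_expChar_pow]
  rw [← hfrob, ← hfrob]
  linear_combination -(pow_mul_eq_pow_mul_of_pow_six_eq h6 hk)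

theorem IsEquianharmonic.det_eq_zero {a₁ a₂ a₃ a₄ : R} (h : IsEquianharmonic a₁ a₂ a₃ a₄)
    (p k : ℕ) [ExpChar R p] (hk : p ^ k % 6 = 1) :
    (Matrix.of fun i j => ![a₁, a₂, a₃, a₄] i ^ hyperquadraticExponents (p ^ k) j).det = 0 := by
  simp [det_succ_row_zero, Fin.sum_univ_succ, Fin.succAbove, hyperquadraticExponents, pow_succ]
  linear_combination h.cross_ratio_pow_eq p k hk

/-- The witness is `(X - s) ^ p ^ k * (X - t) = (X ^ p ^ k - s ^ p ^ k) * (X - t)`. -/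
theorem exists_triple_root_dvd [Nontrivial R] (p k : ℕ) [ExpChar R p] (hk : 3 ≤ p ^ k)
    (s t : R) : ∃ v : Fin 4 → R, v ≠ 0 ∧
      (X - C s) ^ 3 * (X - C t) ∣ ∑ j, C (v j) * X ^ hyperquadraticExponents (p ^ k) j := by
  refine ⟨![1, -t, -s ^ p ^ k, s ^ p ^ k * t], fun h => by simpa using congrFun h 0, ?_⟩
  have hfrob : (X - C s) ^ p ^ k = X ^ p ^ k - C (s ^ p ^ k) := by
    rw [sub_pow_expChar_pow, ← map_pow]
  rw [sum_hyperquadraticExponents]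
  refine ⟨(X - C s) ^ (p ^ k - 3), ?_⟩
  calc _ = (X - C s) ^ p ^ k * (X - C t) := by
        rw [hfrob]; simp only [cons_val, map_neg, map_mul, map_one, map_pow]; ring
    _ = _ := by rw [← pow_mul_pow_sub _ hk]; ring

end CommRing

section Field

variable {L : Type*} [Field L]

theorem isEquianharmonic_self_left_iff {s t u : L} :
    IsEquianharmonic s s t u ↔ t = s ∨ u = s := by
  have h : IsEquianharmonic s s t u ↔ ((t - s) * (u - s)) ^ 2 = 0 := by
    unfold IsEquianharmonic
    constructor <;> intro h <;> linear_combination h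
  rw [h, pow_eq_zero_iff two_ne_zero, mul_eq_zero, sub_eq_zero, sub_eq_zero]

theorem IsEquianharmonic.exists_dvd {a₁ a₂ a₃ a₄ : L} (h : IsEquianharmonic a₁ a₂ a₃ a₄)
    (hnd : ({a₁, a₂, a₃, a₄} : Multiset L).Nodup) (p k : ℕ) [ExpChar L p]
    (hk : p ^ k % 6 = 1) (hk₁ : 1 < p ^ k) :
    ∃ v : Fin 4 → L, v ≠ 0 ∧ (({a₁, a₂, a₃, a₄} : Multiset L).map (X - C ·)).prod
      ∣ ∑ j, C (v j) * X ^ hyperquadraticExponents (p ^ k) j := by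
  obtain ⟨v, hv, heval⟩ := exists_forall_eval_eq_zero_of_det_eq_zero _ _ (h.det_eq_zero p k hk)
  have hne := sum_C_mul_X_pow_ne_zero (hyperquadraticExponents_injective hk₁) hv
  refine ⟨v, hv, (Multiset.prod_X_sub_C_dvd_iff_le_roots hne _).mpr ?_⟩
  rw [Multiset.le_iff_subset hnd]
  intro a ha
  rw [mem_roots hne]
  simp only [Multiset.insert_eq_cons, Multiset.mem_cons, Multiset.mem_singleton] at ha
  rcases ha with rfl | rfl | rfl | rfl
  exacts [heval 0, heval 1, heval 2, heval 3]

theorem exists_dvd_of_splits (p k : ℕ) [ExpChar L p] {b c d : L} (hcd : 12 * d + c ^ 2 = 0)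
    (hs : (X ^ 4 + C b * X ^ 3 + C c * X ^ 2 + C d).Splits) (hk : p ^ k % 6 = 1)
    (hk₁ : 1 < p ^ k) : ∃ v : Fin 4 → L, v ≠ 0 ∧
      X ^ 4 + C b * X ^ 3 + C c * X ^ 2 + C d ∣
        ∑ j, C (v j) * X ^ hyperquadraticExponents (p ^ k) j := by
  have hprod := hs.eq_prod_roots_of_monic (monic_quartic b c d)
  have hcard := hs.natDegree_eq_card_roots
  rw [natDegree_quartic] at hcard
  set Q := X ^ 4 + C b * X ^ 3 + C c * X ^ 2 + C d
  by_cases hnd : Q.roots.Nodup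
  · obtain ⟨a₁, a₂, a₃, a₄, hroots⟩ := Multiset.card_eq_four.mp hcard.symm
    rw [hroots] at hprod hnd
    have hQ : Q = (X - C a₁) * (X - C a₂) * (X - C a₃) * (X - C a₄) := by
      rw [hprod]
      simp only [Multiset.insert_eq_cons, Multiset.map_cons, Multiset.map_singleton,
        Multiset.prod_cons, Multiset.prod_singleton]
      ring
    rw [hprod]
    exact (isEquianharmonic_of_quartic_eq_prod hcd hQ).exists_dvd hnd p k hk hk₁
  · obtain ⟨s, m, hm⟩ : ∃ s m, Q.roots = s ::ₘ s ::ₘ m := by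
      simpa [Multiset.nodup_iff_ne_cons_cons] using hnd
    obtain ⟨t, u, rfl⟩ := Multiset.card_eq_two.mp (by simpa [hm] using hcard.symm)
    have hQ : Q = (X - C s) * (X - C s) * (X - C t) * (X - C u) := by
      rw [hprod, hm]
      simp only [Multiset.insert_eq_cons, Multiset.map_cons, Multiset.map_singleton,
        Multiset.prod_cons, Multiset.prod_singleton]
      ring
    obtain ⟨x, hx⟩ : ∃ x, Q = (X - C s) ^ 3 * (X - C x) := by
      rcases isEquianharmonic_self_left_iff.mp (isEquianharmonic_of_quartic_eq_prod hcd hQ)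
        with rfl | rfl
      · exact ⟨u, by rw [hQ]; ring⟩
      · exact ⟨t, by rw [hQ]; ring⟩
    rw [hx]
    exact exists_triple_root_dvd p k (by omega) s x

theorem exists_dvd_hyperquadratic (p k : ℕ) [ExpChar L p] {b c d : L}
    (hcd : 12 * d + c ^ 2 = 0) (hk : p ^ k % 6 = 1) (hk₁ : 1 < p ^ k) :
    ∃ v : Fin 4 → L, v ≠ 0 ∧
      X ^ 4 + C b * X ^ 3 + C c * X ^ 2 + C d ∣
        ∑ j, C (v j) * X ^ hyperquadraticExponents (p ^ k) j := by
  let f := algebraMap L (X ^ 4 + C b * X ^ 3 + C c * X ^ 2 + C d).SplittingField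
  have hmap : (X ^ 4 + C b * X ^ 3 + C c * X ^ 2 + C d).map f
      = X ^ 4 + C (f b) * X ^ 3 + C (f c) * X ^ 2 + C (f d) := by simp
  refine exists_dvd_sum_C_mul_X_pow_of_map f (monic_quartic b c d) (natDegree_quartic b c d) _ ?_
  rw [hmap]
  refine exists_dvd_of_splits p k ?_ (hmap ▸ SplittingField.splits _) hk hk₁
  simpa [map_ofNat f] using congrArg f hcd

end Field

/-- (Bluher–Lasjaunias) Let `p > 3`, `A, B, C ∈ F_q(T)` with `12A + C² = 0`, `A ≠ 0`, and
`P(X) = AX⁴ + BX³ + CX² + 1`. With `r = p` if `p ≡ 1 mod 3` and `r = p²` if `p ≡ 2 mod 3`,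
`P` divides a nonzero polynomial of the form `UX^{r+1} + VX^r + WX + Z`. -/
theorem quartic_divides_hyperquadratic (Fq : Type*) [Field Fq]
    (p : ℕ) [Fact p.Prime] [CharP Fq p] (hp : 3 < p)
    (A B C : RatFunc Fq) (hA : A ≠ 0) (hAC : 12 * A + C ^ 2 = 0)
    (r : ℕ) (hr : r = if p % 3 = 1 then p else p ^ 2) :
    ∃ U V W Z : RatFunc Fq,
      (Polynomial.C U * X ^ (r + 1) + Polynomial.C V * X ^ r +
          Polynomial.C W * X + Polynomial.C Z : Polynomial (RatFunc Fq)) ≠ 0 ∧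
      (Polynomial.C A * X ^ 4 + Polynomial.C B * X ^ 3 + Polynomial.C C * X ^ 2 + 1) ∣
        (Polynomial.C U * X ^ (r + 1) + Polynomial.C V * X ^ r +
          Polynomial.C W * X + Polynomial.C Z) := by
  obtain ⟨k, hk, hk6, hk₁⟩ := exists_pow_eq_ite_of_prime Fact.out hp
  rw [hr, hk]
  have hcd : 12 * A⁻¹ + (C / A) ^ 2 = 0 := by
    field_simp
    linear_combination hAC
  obtain ⟨v, hv, hdvd⟩ := exists_dvd_hyperquadratic p k (b := B / A) hcd hk6 hk₁
  have hP : Polynomial.C A * X ^ 4 + Polynomial.C B * X ^ 3 + Polynomial.C C * X ^ 2 + 1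
      = Polynomial.C A * (X ^ 4 + Polynomial.C (B / A) * X ^ 3 + Polynomial.C (C / A) * X ^ 2
        + Polynomial.C A⁻¹) := by
    simp only [mul_add, ← mul_assoc, ← map_mul, mul_div_cancel₀ _ hA, mul_inv_cancel₀ hA, map_one]
  refine ⟨v 0, v 1, v 2, v 3, ?_, ?_⟩
  · rw [← sum_hyperquadraticExponents]
    exact sum_C_mul_X_pow_ne_zero (hyperquadraticExponents_injective hk₁) hv
  · rw [hP, C_mul_dvd hA, ← sum_hyperquadraticExponents]
    exact hdvd
end
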